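/- The set Z = {Σ_{ξ∈T} c_ξ E_ξ : c_ξ ∈ K} is stable under the adjoint action of U_L: for every one-parameter subgroup g_{i,j}(t) = I + tE_{i,j} with (i,j) a positive root of the reductive part r, one has Ad_{g_{i,j}(t)} Z ⊆ Z. -/

import Mathlib

open scoped Matrix Classical
open MvPolynomial

/-- `Rsum r k = r 0 + ⋯ + r (k-1)`, the partial sum `R_k` of block sizes. -/
def Rsum (r : ℕ → ℕ) (k : ℕ) : ℕ := (Finset.range k).sum r

/-- Index of the diagonal block containing row/column `a` (0-indexed). -/
def blockOf (r : ℕ → ℕ) (s a : ℕ) : ℕ :=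
  ((Finset.range s).filter fun k => Rsum r (k + 1) ≤ a).card

/-- The set `M` of roots `(i,j)` of the nilradical `m`. -/
def Mset (r : ℕ → ℕ) (s n : ℕ) : Finset (Fin n × Fin n) :=
  Finset.univ.filter fun p => blockOf r s (p.1 : ℕ) < blockOf r s (p.2 : ℕ)

/-- `γ' > γ` iff `γ' − γ` is a positive root. -/
def rootGt {n : ℕ} (γ' γ : Fin n × Fin n) : Prop :=
  (γ'.1 = γ.1 ∧ γ.2 < γ'.2) ∨ (γ'.2 = γ.2 ∧ γ'.1 < γ.1)

/-- A base `S` of `M`: pairwise incomparable, and every root of `M ∖ S`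
exceeds some element of `S`. -/
def IsBase {n : ℕ} (M S : Finset (Fin n × Fin n)) : Prop :=
  S ⊆ M ∧
  (∀ ξ ∈ S, ∀ η ∈ S, ξ ≠ η → ¬rootGt ξ η ∧ ¬rootGt η ξ) ∧
  (∀ γ ∈ M, γ ∉ S → ∃ ξ ∈ S, rootGt γ ξ)

/-- `p` is a positive root of the reductive (block-diagonal) part `r`. -/
def inDr (r : ℕ → ℕ) (s : ℕ) {n : ℕ} (p : Fin n × Fin n) : Prop :=
  p.1 < p.2 ∧ blockOf r s (p.1 : ℕ) = blockOf r s (p.2 : ℕ)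

/-- The coordinate ring `K[m]`: polynomials in the variables `x_ξ`, `ξ ∈ M`. -/
abbrev Rpoly (K : Type) [Field K] (r : ℕ → ℕ) (s n : ℕ) : Type :=
  MvPolynomial {p : Fin n × Fin n // p ∈ Mset r s n} K

/-- The formal matrix `𝕏` of variables (zero outside `M`). -/
noncomputable def Xmat (K : Type) [Field K] (r : ℕ → ℕ) (s n : ℕ) :
    Matrix (Fin n) (Fin n) (Rpoly K r s n) :=
  Matrix.of fun i j => if h : (i, j) ∈ Mset r s n then MvPolynomial.X ⟨(i, j), h⟩ else 0

/-- The minor of a matrix on the ordered row set `I` and ordered column set `J`. -/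
noncomputable def minorDet {n : ℕ} {A : Type} [CommRing A]
    (X : Matrix (Fin n) (Fin n) A) (I J : Finset (Fin n)) : A :=
  if h : J.card = I.card then
    Matrix.det (Matrix.of fun p q : Fin I.card =>
      X (I.orderIsoOfFin rfl p).1 (J.orderIsoOfFin h q).1)
  else 0

/-- The minor `M_γ` attached to a root `γ = (a,b)`: rows `ord{a, i₁, …, i_k}`,
columns `ord{j₁, …, j_k, b}`, where `S_γ = {(i,j) ∈ S : i > a, j < b}`. -/
noncomputable def Mminor (K : Type) [Field K] (r : ℕ → ℕ) (s n : ℕ)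
    (S : Finset (Fin n × Fin n)) (γ : Fin n × Fin n) : Rpoly K r s n :=
  minorDet (Xmat K r s n)
    (insert γ.1 ((S.filter fun p => γ.1 < p.1 ∧ p.2 < γ.2).image Prod.fst))
    (insert γ.2 ((S.filter fun p => γ.1 < p.1 ∧ p.2 < γ.2).image Prod.snd))

/-- The polynomial `L_{φ_q}` for an admissible pair `q = (ξ, ξ')`:
`Σ_{α₁+α₂=α_q, α₁,α₂ ∈ Δ⁺_r ∪ {0}} M_{ξ+α₁} M_{α₂+ξ'}`. -/
noncomputable def Lpoly (K : Type) [Field K] (r : ℕ → ℕ) (s n : ℕ)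
    (S : Finset (Fin n × Fin n)) (ξ ξ' : Fin n × Fin n) : Rpoly K r s n :=
  ∑ m ∈ Finset.univ.filter (fun m : Fin n =>
      (m = ξ.2 ∨ inDr r s (ξ.2, m)) ∧ (m = ξ'.1 ∨ inDr r s (m, ξ'.1))),
    Mminor K r s n S (ξ.1, m) * Mminor K r s n S (m, ξ'.2)

/-- The set `Φ` of roots `φ_q = α_q + ξ'` attached to admissible pairs `q = (ξ, ξ')`. -/
noncomputable def PhiSet (r : ℕ → ℕ) (s n : ℕ) (S : Finset (Fin n × Fin n)) :
    Finset (Fin n × Fin n) :=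
  ((S ×ˢ S).filter fun q => inDr r s (q.1.2, q.2.1)).image fun q => (q.1.2, q.2.2)

/-- The adjoint action of `g` on `K[m]`: the substitution `x_ξ ↦ (g⁻¹ 𝕏 g)_ξ`,
so that `(g·f)(x) = f(g⁻¹ x g)`. -/
noncomputable def adjAct (K : Type) [Field K] (r : ℕ → ℕ) (s n : ℕ)
    (g : Matrix (Fin n) (Fin n) K) : Rpoly K r s n →ₐ[K] Rpoly K r s n :=
  MvPolynomial.aeval fun ξ : {p : Fin n × Fin n // p ∈ Mset r s n} =>
    ((g⁻¹).map (fun a => (MvPolynomial.C a : Rpoly K r s n)) * Xmat K r s n *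
      g.map (fun a => (MvPolynomial.C a : Rpoly K r s n))) ξ.1.1 ξ.1.2

/-- Upper unitriangular matrices: the group `N`. -/
def IsUnitriangular {K : Type} [Field K] {n : ℕ} (g : Matrix (Fin n) (Fin n) K) : Prop :=
  (∀ i, g i i = 1) ∧ ∀ i j : Fin n, j < i → g i j = 0

/-- Membership in the unipotent radical `U` of `P`: `g = I + u` with `u ∈ m`. -/
def InU {K : Type} [Field K] (r : ℕ → ℕ) (s n : ℕ) (g : Matrix (Fin n) (Fin n) K) : Prop :=
  (∀ i, g i i = 1) ∧ ∀ i j : Fin n, i ≠ j → (i, j) ∉ Mset r s n → g i j = 0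

/-- The subalgebra of `K[m]` of polynomials invariant under the adjoint action of
all elements of a set `G` of matrices. -/
noncomputable def invariantAlg (K : Type) [Field K] (r : ℕ → ℕ) (s n : ℕ)
    (G : Set (Matrix (Fin n) (Fin n) K)) : Subalgebra K (Rpoly K r s n) where
  carrier := {f | ∀ g ∈ G, adjAct K r s n g f = f}
  mul_mem' := fun ha hb g hg => by rw [map_mul, ha g hg, hb g hg]
  add_mem' := fun ha hb g hg => by rw [map_add, ha g hg, hb g hg]
  algebraMap_mem' := fun c g hg => (adjAct K r s n g).commutes c

/-- `M'`: the roots of `M` with `E_ξ ∈ m²`, i.e. not lying in a superdiagonal block. -/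
def Mprime (r : ℕ → ℕ) (s n : ℕ) : Finset (Fin n × Fin n) :=
  (Mset r s n).filter fun p => blockOf r s (p.1 : ℕ) + 1 < blockOf r s (p.2 : ℕ)

/-- The broad base `T`: roots `ξ ∈ S`, together with roots `ξ ∈ M` such that
`ξ > γ` for some `γ ∈ S` with `x_ξ`, `x_γ` in the same block `X_{i,j}`. -/
noncomputable def Tset (r : ℕ → ℕ) (s n : ℕ) (S : Finset (Fin n × Fin n)) :
    Finset (Fin n × Fin n) :=
  S ∪ (Mset r s n).filter fun ξ => ∃ γ ∈ S, rootGt ξ γ ∧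
    blockOf r s (ξ.1 : ℕ) = blockOf r s (γ.1 : ℕ) ∧
    blockOf r s (ξ.2 : ℕ) = blockOf r s (γ.2 : ℕ)

/-- The invariant `N_ξ`: the variable `x_ξ` for `ξ ∈ M ∖ M'`, the minor `M_ξ` for `ξ ∈ M'`. -/
noncomputable def Npoly (K : Type) [Field K] (r : ℕ → ℕ) (s n : ℕ)
    (S : Finset (Fin n × Fin n)) (ξ : Fin n × Fin n) : Rpoly K r s n :=
  if ξ ∈ Mprime r s n then Mminor K r s n S ξ
  else if h : ξ ∈ Mset r s n then MvPolynomial.X ⟨ξ, h⟩ else 0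

/-- A matrix lies in the nilradical `m`. -/
def memNilrad {K : Type} [Field K] (r : ℕ → ℕ) (s n : ℕ)
    (x : Matrix (Fin n) (Fin n) K) : Prop :=
  ∀ p : Fin n × Fin n, p ∉ Mset r s n → x p.1 p.2 = 0

/-- `W` is a Zariski-open subset of the affine space `m`. -/
def IsZariskiOpenIn (K : Type) [Field K] (r : ℕ → ℕ) (s n : ℕ)
    (W : Set (Matrix (Fin n) (Fin n) K)) : Prop :=
  ∃ I : Set (Rpoly K r s n),
    W = {x | memNilrad r s n x ∧ ∃ f ∈ I,
      MvPolynomial.eval (fun ξ : {p : Fin n × Fin n // p ∈ Mset r s n} => x ξ.1.1 ξ.1.2) f ≠ 0}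

/-! The conjugate `(1 + tE_{ij}) z (1 + tE_{ij})⁻¹ = z + tE_{ij}z - t zE_{ij} - t² E_{ij}zE_{ij}`
differs from `z` at `(a, b)` only through `z_{j,b}` (if `a = i`), `z_{a,i}` (if `b = j`) and
`z_{j,i}`. So it suffices that `T` is closed under moving a root up or to the right inside its
block, and that `(j, i) ∉ T`. Closure holds because `T` consists exactly of the roots having an
element of the base `S` weakly below-left of them in the same block; the nontrivial direction uses
that two base elements, one strictly below-right of the other, leave the corner between them
outside `M`. -/

section Conjugation

variable {R : Type*} [CommRing R] {ι : Type*} [Fintype ι] [DecidableEq ι]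

lemma Matrix.inv_one_add_single_of_ne {i j : ι} (hij : i ≠ j) (t : R) :
    (1 + Matrix.single i j t)⁻¹ = 1 - Matrix.single i j t := by
  apply Matrix.inv_eq_right_inv
  have hsq : Matrix.single i j t * Matrix.single i j t = 0 := by simp [hij.symm]
  calc (1 + Matrix.single i j t) * (1 - Matrix.single i j t)
      = 1 - Matrix.single i j t * Matrix.single i j t := by noncomm_ring
    _ = 1 := by rw [hsq, sub_zero]

lemma Matrix.conj_one_add_single_apply {i j : ι} (hij : i ≠ j) (t : R) (z : Matrix ι ι R)
    (a b : ι) :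
    ((1 + Matrix.single i j t) * z * (1 + Matrix.single i j t)⁻¹) a b =
      z a b + (if a = i then t * z j b else 0) - (if b = j then z a i * t else 0) -
        (if a = i ∧ b = j then t * z j i * t else 0) := by
  rw [Matrix.inv_one_add_single_of_ne hij]
  have hexpand : (1 + Matrix.single i j t) * z * (1 - Matrix.single i j t) =
      z + Matrix.single i j t * z - z * Matrix.single i j t -
        Matrix.single i j t * z * Matrix.single i j t := by noncomm_ring
  rw [hexpand]
  simp only [Matrix.sub_apply, Matrix.add_apply]
  by_cases ha : a = i <;> by_cases hb : b = j <;>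
    simp [ha, hb, Matrix.single_mul_apply_same, Matrix.mul_single_apply_same,
      Matrix.single_mul_apply_of_ne, Matrix.mul_single_apply_of_ne]

end Conjugation

section Base

variable {n : ℕ} {M S : Finset (Fin n × Fin n)}

lemma IsBase.eq_of_fst_eq (hS : IsBase M S) {ξ η : Fin n × Fin n} (hξ : ξ ∈ S) (hη : η ∈ S)
    (h : ξ.1 = η.1) : ξ = η := by
  by_contra hne
  rcases lt_trichotomy ξ.2 η.2 with hlt | heq | hgt
  · exact (hS.2.1 η hη ξ hξ (Ne.symm hne)).1 (Or.inl ⟨h.symm, hlt⟩)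
  · exact hne (Prod.ext h heq)
  · exact (hS.2.1 ξ hξ η hη hne).1 (Or.inl ⟨h, hgt⟩)

lemma IsBase.eq_of_snd_eq (hS : IsBase M S) {ξ η : Fin n × Fin n} (hξ : ξ ∈ S) (hη : η ∈ S)
    (h : ξ.2 = η.2) : ξ = η := by
  by_contra hne
  rcases lt_trichotomy ξ.1 η.1 with hlt | heq | hgt
  · exact (hS.2.1 ξ hξ η hη hne).1 (Or.inr ⟨h, hlt⟩)
  · exact hne (Prod.ext heq h)
  · exact (hS.2.1 η hη ξ hξ (Ne.symm hne)).1 (Or.inr ⟨h.symm, hgt⟩)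

/-- A base element of `M` below the corner `(a', b)` would lie in row `a'` or column `b`,
each of which already holds an element of `S`. -/
lemma IsBase.corner_notMem (hS : IsBase M S) {a a' b b' : Fin n} (h : (a, b) ∈ S)
    (h' : (a', b') ∈ S) (ha : a < a') (hb : b < b') : (a', b) ∉ M := by
  intro hM
  have hcorner : (a', b) ∉ S := fun hmem => ha.ne (congrArg Prod.fst (hS.eq_of_snd_eq h hmem rfl))
  obtain ⟨⟨e, c⟩, hη, ⟨rfl, hc⟩ | ⟨rfl, he⟩⟩ := hS.2.2 _ hM hcorner
  · cases hS.eq_of_fst_eq hη h' rfl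
    exact (hb.trans hc).false
  · cases hS.eq_of_snd_eq hη h rfl
    exact (ha.trans he).false

end Base

section Blocks

variable {r : ℕ → ℕ} {s n : ℕ} {S : Finset (Fin n × Fin n)}

lemma blockOf_mono (r : ℕ → ℕ) (s : ℕ) : Monotone (blockOf r s) :=
  fun _ _ h => Finset.card_le_card fun _ hk => by
    simp only [Finset.mem_filter] at hk ⊢
    exact ⟨hk.1, hk.2.trans h⟩

lemma Fin.lt_of_blockOf_lt {a b : Fin n} (h : blockOf r s a < blockOf r s b) : a < b :=
  Fin.lt_def.2 ((blockOf_mono r s).reflect_lt h)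

lemma Fin.blockOf_le_of_le {a b : Fin n} (h : a ≤ b) : blockOf r s a ≤ blockOf r s b :=
  blockOf_mono r s (Fin.le_def.1 h)

lemma mem_Mset_iff {p : Fin n × Fin n} :
    p ∈ Mset r s n ↔ blockOf r s p.1 < blockOf r s p.2 := by
  simp [Mset]

lemma mem_Tset_of_southwest (hS : IsBase (Mset r s n) S) {x y x' y' : Fin n}
    (hγ : (x', y') ∈ S) (hx : x ≤ x') (hy : y' ≤ y) (hbx : blockOf r s x = blockOf r s x')
    (hby : blockOf r s y = blockOf r s y') : (x, y) ∈ Tset r s n S := by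
  have hγM : blockOf r s x' < blockOf r s y' := mem_Mset_iff.1 (hS.1 hγ)
  have hM : (x, y) ∈ Mset r s n := mem_Mset_iff.2 (by rw [hbx, hby]; exact hγM)
  have of_gt : ∀ η ∈ S, rootGt (x, y) η → blockOf r s x = blockOf r s η.1 →
      blockOf r s y = blockOf r s η.2 → (x, y) ∈ Tset r s n S :=
    fun η hη hgt h1 h2 => Finset.mem_union_right _ (Finset.mem_filter.2 ⟨hM, η, hη, hgt, h1, h2⟩)
  rcases hx.eq_or_lt with rfl | hx
  · rcases hy.eq_or_lt with rfl | hy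
    · exact Finset.mem_union_left _ hγ
    · exact of_gt _ hγ (Or.inl ⟨rfl, hy⟩) hbx hby
  rcases hy.eq_or_lt with rfl | hy
  · exact of_gt _ hγ (Or.inr ⟨rfl, hx⟩) hbx hby
  by_cases hS' : (x, y) ∈ S
  · exact Finset.mem_union_left _ hS'
  obtain ⟨⟨e, c⟩, hη, ⟨hxe : x = e, hc⟩ | ⟨hyc : y = c, he⟩⟩ := hS.2.2 _ hM hS'
  · subst hxe
    refine of_gt _ hη (Or.inl ⟨rfl, hc⟩) rfl ?_
    by_contra hne
    have hcy : blockOf r s c < blockOf r s y' :=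
      hby ▸ lt_of_le_of_ne (Fin.blockOf_le_of_le hc.le) (Ne.symm hne)
    have hηM : blockOf r s x < blockOf r s c := mem_Mset_iff.1 (hS.1 hη)
    exact hS.corner_notMem hη hγ hx (Fin.lt_of_blockOf_lt hcy)
      (mem_Mset_iff.2 (by rw [← hbx]; exact hηM))
  · subst hyc
    refine of_gt _ hη (Or.inr ⟨rfl, he⟩) ?_ rfl
    by_contra hne
    have hxe : blockOf r s x' < blockOf r s e :=
      hbx ▸ lt_of_le_of_ne (Fin.blockOf_le_of_le he.le) hne
    have hηM : blockOf r s e < blockOf r s y := mem_Mset_iff.1 (hS.1 hη)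
    exact hS.corner_notMem hγ hη (Fin.lt_of_blockOf_lt hxe) hy
      (mem_Mset_iff.2 (by rw [← hby]; exact hηM))

lemma mem_Tset_iff_exists_southwest (hS : IsBase (Mset r s n) S) {ξ : Fin n × Fin n} :
    ξ ∈ Tset r s n S ↔ ∃ γ ∈ S, ξ.1 ≤ γ.1 ∧ γ.2 ≤ ξ.2 ∧
      blockOf r s ξ.1 = blockOf r s γ.1 ∧ blockOf r s ξ.2 = blockOf r s γ.2 := by
  constructor
  · rintro hξ
    rcases Finset.mem_union.1 hξ with hξ | hξ
    · exact ⟨ξ, hξ, le_rfl, le_rfl, rfl, rfl⟩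
    · obtain ⟨-, γ, hγ, ⟨h1, h2⟩ | ⟨h2, h1⟩, hb1, hb2⟩ := Finset.mem_filter.1 hξ
      · exact ⟨γ, hγ, h1.le, h2.le, hb1, hb2⟩
      · exact ⟨γ, hγ, h1.le, h2.ge, hb1, hb2⟩
  · rintro ⟨⟨x', y'⟩, hγ, hx, hy, hbx, hby⟩
    exact mem_Tset_of_southwest hS hγ hx hy hbx hby

lemma mem_Tset_of_le_of_le (hS : IsBase (Mset r s n) S) {a b a' b' : Fin n}
    (hT : (a, b) ∈ Tset r s n S) (ha : a' ≤ a) (hb : b ≤ b')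
    (hba : blockOf r s a' = blockOf r s a) (hbb : blockOf r s b' = blockOf r s b) :
    (a', b') ∈ Tset r s n S := by
  obtain ⟨γ, hγ, hx, hy, hbx, hby⟩ := (mem_Tset_iff_exists_southwest hS).1 hT
  exact (mem_Tset_iff_exists_southwest hS).2
    ⟨γ, hγ, ha.trans hx, hy.trans hb, hba.trans hbx, hbb.trans hby⟩

lemma Tset_subset_Mset (hS : IsBase (Mset r s n) S) : Tset r s n S ⊆ Mset r s n :=
  Finset.union_subset hS.1 (Finset.filter_subset _ _)

end Blocks

theorem statement13_general (K : Type) [Field K]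
    (n s : ℕ) (r : ℕ → ℕ)
    (S : Finset (Fin n × Fin n)) (hS : IsBase (Mset r s n) S)
    (i j : Fin n) (hij : inDr r s (i, j)) (t : K)
    (z : Matrix (Fin n) (Fin n) K)
    (hz : ∀ p : Fin n × Fin n, p ∉ Tset r s n S → z p.1 p.2 = 0) :
    ∀ p : Fin n × Fin n, p ∉ Tset r s n S →
      ((1 + Matrix.single i j t) * z * (1 + Matrix.single i j t)⁻¹)
        p.1 p.2 = 0 := by
  obtain ⟨hlt, hblock⟩ := hij
  have hrow : ∀ b, (i, b) ∉ Tset r s n S → z j b = 0 := fun b hb => hz (j, b) fun hT =>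
    hb (mem_Tset_of_le_of_le hS hT hlt.le le_rfl hblock rfl)
  have hcol : ∀ a, (a, j) ∉ Tset r s n S → z a i = 0 := fun a ha => hz (a, i) fun hT =>
    ha (mem_Tset_of_le_of_le hS hT le_rfl hlt.le rfl hblock.symm)
  have hji : z j i = 0 := hz (j, i) fun hT =>
    (mem_Mset_iff.1 (Tset_subset_Mset hS hT)).ne hblock.symm
  rintro ⟨a, b⟩ hp
  rw [Matrix.conj_one_add_single_apply hlt.ne t z a b, hz _ hp]
  by_cases ha : a = i <;> by_cases hb : b = j <;> subst_vars
  · simp [hrow _ hp, hcol _ hp, hji]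
  · simp [hb, hrow _ hp]
  · simp [ha, hcol _ hp]
  · simp [ha, hb]

/-- `Z = {Σ_{ξ∈T} c_ξ E_ξ : c_ξ ∈ K}` is stable under the adjoint action
of the one-parameter subgroups `g_{i,j}(t) = I + t E_{i,j}`, `(i,j) ∈ Δ⁺_r`, of `U_L`. -/
theorem statement13 (K : Type) [Field K] [IsAlgClosed K] [CharZero K]
    (n s : ℕ) (r : ℕ → ℕ) (hpos : ∀ k < s, 0 < r k) (hsum : Rsum r s = n)
    (S : Finset (Fin n × Fin n)) (hS : IsBase (Mset r s n) S)
    (i j : Fin n) (hij : inDr r s (i, j)) (t : K)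
    (z : Matrix (Fin n) (Fin n) K)
    (hz : ∀ p : Fin n × Fin n, p ∉ Tset r s n S → z p.1 p.2 = 0) :
    ∀ p : Fin n × Fin n, p ∉ Tset r s n S →
      ((1 + Matrix.single i j t) * z * (1 + Matrix.single i j t)⁻¹)
        p.1 p.2 = 0 :=
  statement13_general K n s r S hS i j hij t z hz
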